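/- Let Z₁, …, Z_n be i.i.d. random variables with common distribution G on a measurable space 𝒵, let ξ : 𝒵 → ℝ be measurable with mean m := E_G[ξ] and variance σ² := Var_G(ξ) ∈ (0,∞), and let Δ := sup_{t ∈ ℝ} |P((∑ᵢ ξ(Zᵢ) − n·m)/(√n·σ) ≤ t) − Φ(t)|. Let α ∈ (0,1), a > 0, b > 0, and ε ∈ [0,1) be such that |m + b²/2| ≤ ε·b²/2. Then |P(∑_{i=1}^n ξ(Zᵢ) > log(1/α)) − (1 − Φ(log(1/α)/(√n·a) + √n·b²/(2a)))| ≤ Δ + (max{σ/a, a/σ} − 1)/√(2πe) + ε/((1−ε)·√(2πe)). -/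

import Mathlib

open MeasureTheory Real ProbabilityTheory

/-- The standard normal cumulative distribution function. -/
noncomputable def Phi (t : ℝ) : ℝ :=
  (Real.sqrt (2 * Real.pi))⁻¹ * ∫ x in Set.Iic t, Real.exp (-x ^ 2 / 2)

/-!
The event is the complement of `{T ≤ tₛ}` for the standardised sum `T`, with
`tₛ = (log(1/α) − n m)/(√n σ)`, so up to `Δ` its probability is `1 − Φ(tₛ)`. The bias condition puts
`tₛ` within `ε d` of `t = log(1/α)/(√n σ) + d`, where `d = √n b²/(2σ) ≤ t`, and the target threshold
is `(σ/a) t`. Both comparisons of `Φ` rest on one estimate: the Gaussian density `φ` decreases on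
`[0, ∞)`, so `|Φ y − Φ x| ≤ |y − x| φ(u)` when `x, y ≥ u ≥ 0`, and if moreover `|y − x| ≤ c u` this
is at most `c u φ(u) ≤ c φ(1) = c / √(2πe)`.
-/

lemma integrable_exp_neg_sq_div_two : Integrable fun t : ℝ => exp (-t ^ 2 / 2) := by
  convert integrable_exp_neg_mul_sq one_half_pos using 3
  ring

lemma Phi_sub_Phi (x y : ℝ) :
    Phi y - Phi x = (√(2 * π))⁻¹ * ∫ t in x..y, exp (-t ^ 2 / 2) := by
  rw [Phi, Phi, ← mul_sub, intervalIntegral.integral_Iic_sub_Iic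
    integrable_exp_neg_sq_div_two.integrableOn integrable_exp_neg_sq_div_two.integrableOn]

lemma Phi_mono : Monotone Phi := fun x y hxy => by
  rw [← sub_nonneg, Phi_sub_Phi]
  exact mul_nonneg (by positivity)
    (intervalIntegral.integral_nonneg hxy fun _ _ => (exp_pos _).le)

lemma Phi_sub_Phi_le {u x y : ℝ} (hu : 0 ≤ u) (hx : u ≤ x) (hxy : x ≤ y) :
    Phi y - Phi x ≤ (y - x) * exp (-u ^ 2 / 2) / √(2 * π) := by
  have hint : ∫ t in x..y, exp (-t ^ 2 / 2) ≤ ∫ _ in x..y, exp (-u ^ 2 / 2) :=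
    intervalIntegral.integral_mono_on hxy
      integrable_exp_neg_sq_div_two.intervalIntegrable intervalIntegrable_const
      fun t ht => exp_le_exp.2 (by nlinarith [ht.1])
  rw [intervalIntegral.integral_const, smul_eq_mul] at hint
  rw [Phi_sub_Phi, inv_mul_eq_div]
  gcongr

lemma abs_Phi_sub_Phi_le {u x y : ℝ} (hu : 0 ≤ u) (hx : u ≤ x) (hy : u ≤ y) :
    |Phi y - Phi x| ≤ |y - x| * exp (-u ^ 2 / 2) / √(2 * π) := by
  wlog hxy : x ≤ y generalizing x y
  · rw [abs_sub_comm, abs_sub_comm y]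
    exact this hy hx (le_of_not_ge hxy)
  rw [abs_of_nonneg (sub_nonneg.2 hxy), abs_sub_le_iff]
  refine ⟨Phi_sub_Phi_le hu hx hxy, ?_⟩
  have := Phi_mono hxy
  have : 0 ≤ (y - x) * exp (-u ^ 2 / 2) / √(2 * π) := by
    have := sub_nonneg.2 hxy
    positivity
  linarith

lemma mul_exp_neg_sq_div_two_le (u : ℝ) : u * exp (-u ^ 2 / 2) ≤ exp (-1 / 2) := by
  have h : u ≤ exp ((u ^ 2 - 1) / 2) := by
    nlinarith [add_one_le_exp ((u ^ 2 - 1) / 2), sq_nonneg (u - 1)]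
  calc u * exp (-u ^ 2 / 2) ≤ exp ((u ^ 2 - 1) / 2) * exp (-u ^ 2 / 2) := by gcongr
    _ = exp (-1 / 2) := by rw [← exp_add]; ring_nf

lemma exp_neg_half_div_sqrt_two_pi : exp (-1 / 2) / √(2 * π) = (√(2 * π * exp 1))⁻¹ := by
  rw [sqrt_mul (x := 2 * π) (by positivity), ← exp_half, neg_div, exp_neg]
  ring

lemma abs_Phi_sub_Phi_le_of_abs_sub_le_mul {c u x y : ℝ} (hc : 0 ≤ c) (hu : 0 ≤ u)
    (hx : u ≤ x) (hy : u ≤ y) (hxy : |y - x| ≤ c * u) :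
    |Phi y - Phi x| ≤ c / √(2 * π * exp 1) :=
  calc |Phi y - Phi x| ≤ |y - x| * exp (-u ^ 2 / 2) / √(2 * π) := abs_Phi_sub_Phi_le hu hx hy
    _ ≤ c * u * exp (-u ^ 2 / 2) / √(2 * π) := by gcongr
    _ ≤ c * exp (-1 / 2) / √(2 * π) := by
      rw [mul_assoc]
      gcongr
      exact mul_exp_neg_sq_div_two_le u
    _ = c / √(2 * π * exp 1) := by
      rw [mul_div_assoc, exp_neg_half_div_sqrt_two_pi, div_eq_mul_inv]

lemma abs_Phi_mul_sub_Phi_le {c t : ℝ} (hc : 0 < c) (ht : 0 ≤ t) :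
    |Phi (c * t) - Phi t| ≤ (max c c⁻¹ - 1) / √(2 * π * exp 1) := by
  rcases le_total 1 c with h1 | h1
  · rw [max_eq_left ((inv_le_one_of_one_le₀ h1).trans h1)]
    refine abs_Phi_sub_Phi_le_of_abs_sub_le_mul (sub_nonneg.2 h1) ht le_rfl
      (by nlinarith) (le_of_eq ?_)
    rw [← sub_one_mul, abs_of_nonneg (mul_nonneg (sub_nonneg.2 h1) ht)]
  · have h1' : 1 ≤ c⁻¹ := (one_le_inv₀ hc).2 h1
    rw [max_eq_right (h1.trans h1')]
    refine abs_Phi_sub_Phi_le_of_abs_sub_le_mul (sub_nonneg.2 h1') (by positivity) (by nlinarith)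
      le_rfl (le_of_eq ?_)
    rw [abs_of_nonpos (by nlinarith)]
    field_simp
    ring

lemma abs_Phi_sub_Phi_le_of_abs_sub_le {ε d x y : ℝ} (hε0 : 0 ≤ ε) (hε1 : ε < 1) (hd : 0 ≤ d)
    (hx : d ≤ x) (hxy : |x - y| ≤ ε * d) :
    |Phi x - Phi y| ≤ ε / ((1 - ε) * √(2 * π * exp 1)) := by
  have h1ε : 0 < 1 - ε := sub_pos.2 hε1
  rw [← div_div]
  refine abs_Phi_sub_Phi_le_of_abs_sub_le_mul (u := (1 - ε) * d) (div_nonneg hε0 h1ε.le)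
    (by positivity) (by nlinarith [(abs_le.1 hxy).2]) (by nlinarith) ?_
  convert hxy using 1
  field_simp

lemma abs_measureReal_lt_sub_one_sub_Phi_le {Ω : Type*} [MeasurableSpace Ω] {μ : Measure Ω}
    [IsProbabilityMeasure μ] {S : Ω → ℝ} (hS : Measurable S) {k c Δ : ℝ} (hc : 0 < c)
    (hΔ : ∀ t, |μ.real {ω | (S ω - k) / c ≤ t} - Phi t| ≤ Δ) (L : ℝ) :
    |μ.real {ω | L < S ω} - (1 - Phi ((L - k) / c))| ≤ Δ := by
  have hcompl : μ.real {ω | L < S ω} = 1 - μ.real {ω | S ω ≤ L} := by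
    rw [← probReal_compl_eq_one_sub (measurableSet_le hS measurable_const)]
    simp only [Set.compl_ofPred, not_le]
  have h := hΔ ((L - k) / c)
  simp_rw [div_le_div_iff_of_pos_right hc, sub_le_sub_iff_right] at h
  rw [hcompl, ← abs_neg]
  convert h using 2
  ring

theorem universal_inference_miscoverage_nonasymptotic_general
    {𝒵 : Type*} [MeasurableSpace 𝒵] (G : Measure 𝒵) [IsProbabilityMeasure G]
    (n : ℕ) (hn : 0 < n)
    (ξ : 𝒵 → ℝ) (hξ : Measurable ξ)
    (m σ : ℝ)
    (hσpos : 0 < σ)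
    (Δ : ℝ)
    (hΔ : ∀ t : ℝ, |((Measure.pi fun _ : Fin n => G)
        {ω | ((∑ i, ξ (ω i)) - n * m) / (Real.sqrt n * σ) ≤ t}).toReal - Phi t| ≤ Δ)
    (α a b ε : ℝ) (hα0 : 0 < α) (hα1 : α < 1) (ha : 0 < a)
    (hε0 : 0 ≤ ε) (hε1 : ε < 1)
    (hbias : |m + b ^ 2 / 2| ≤ ε * b ^ 2 / 2) :
    |((Measure.pi fun _ : Fin n => G) {ω | Real.log (1 / α) < ∑ i, ξ (ω i)}).toReal
        - (1 - Phi (Real.log (1 / α) / (Real.sqrt n * a)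
            + Real.sqrt n * b ^ 2 / (2 * a)))| ≤
      Δ + (max (σ / a) (a / σ) - 1) / Real.sqrt (2 * Real.pi * Real.exp 1)
        + ε / ((1 - ε) * Real.sqrt (2 * Real.pi * Real.exp 1)) := by
  set L := log (1 / α)
  set s := √(n : ℝ)
  have hL : 0 ≤ L := log_nonneg (one_le_one_div hα0 hα1.le)
  have hs : 0 < s := sqrt_pos.2 (Nat.cast_pos.2 hn)
  have hns : (n : ℝ) = s * s := (mul_self_sqrt (Nat.cast_nonneg n)).symm
  set d := s * b ^ 2 / (2 * σ)
  set t := L / (s * σ) + d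
  have hd : 0 ≤ d := by positivity
  have hdt : d ≤ t := le_add_of_nonneg_left (by positivity)
  have hBE := abs_measureReal_lt_sub_one_sub_Phi_le
    (S := fun ω : Fin n → 𝒵 => ∑ i, ξ (ω i)) (by fun_prop) (mul_pos hs hσpos)
    (fun x => by rw [measureReal_def]; exact hΔ x) L
  set ts := (L - n * m) / (s * σ)
  have hshift : |Phi t - Phi ts| ≤ ε / ((1 - ε) * √(2 * π * exp 1)) := by
    refine abs_Phi_sub_Phi_le_of_abs_sub_le hε0 hε1 hd hdt ?_
    have : ts - t = -(s / σ) * (m + b ^ 2 / 2) := by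
      simp only [ts, t, d, hns]
      field_simp
      ring
    rw [abs_sub_comm, this, abs_mul, abs_neg, abs_of_pos (div_pos hs hσpos)]
    calc s / σ * |m + b ^ 2 / 2| ≤ s / σ * (ε * b ^ 2 / 2) := by gcongr
      _ = ε * d := by simp only [d]; field_simp
  have hscale : |Phi (σ / a * t) - Phi t| ≤ (max (σ / a) (a / σ) - 1) / √(2 * π * exp 1) := by
    simpa only [inv_div] using abs_Phi_mul_sub_Phi_le (div_pos hσpos ha) (hd.trans hdt)
  have hthreshold : L / (s * a) + s * b ^ 2 / (2 * a) = σ / a * t := by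
    simp only [t, d]
    field_simp
  rw [← measureReal_def, hthreshold]
  set P := (Measure.pi fun _ : Fin n => G).real {ω | L < ∑ i, ξ (ω i)}
  calc |P - (1 - Phi (σ / a * t))|
      ≤ |P - (1 - Phi ts)| + |Phi (σ / a * t) - Phi t| + |Phi t - Phi ts| := by
        have hP := abs_sub_le P (1 - Phi ts) (1 - Phi (σ / a * t))
        have hPhi := abs_sub_le (Phi (σ / a * t)) (Phi t) (Phi ts)
        rw [sub_sub_sub_cancel_left] at hP
        linarith
    _ ≤ _ := by linarith

/-- Nonasymptotic conditional form of Theorem 1: the miscoverage probability of universal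
inference equals `1 − Φ(log(1/α)/(√n a) + √n b²/(2a))` up to the Berry–Esseen error `Δ` and
explicit Gaussian-comparison remainders. The i.i.d. sample `Z₁,…,Z_n ∼ G` is modelled by the
product measure `Measure.pi (fun _ : Fin n => G)`. -/
theorem universal_inference_miscoverage_nonasymptotic
    {𝒵 : Type*} [MeasurableSpace 𝒵] (G : Measure 𝒵) [IsProbabilityMeasure G]
    (n : ℕ) (hn : 0 < n)
    (ξ : 𝒵 → ℝ) (hξ : Measurable ξ)
    (m σ : ℝ) (hm : m = ∫ z, ξ z ∂G)
    (hξ2 : Integrable (fun z => (ξ z) ^ 2) G)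
    (hσ : σ ^ 2 = variance ξ G) (hσpos : 0 < σ)
    (Δ : ℝ)
    (hΔ : ∀ t : ℝ, |((Measure.pi fun _ : Fin n => G)
        {ω | ((∑ i, ξ (ω i)) - n * m) / (Real.sqrt n * σ) ≤ t}).toReal - Phi t| ≤ Δ)
    (α a b ε : ℝ) (hα0 : 0 < α) (hα1 : α < 1) (ha : 0 < a) (hb : 0 < b)
    (hε0 : 0 ≤ ε) (hε1 : ε < 1)
    (hbias : |m + b ^ 2 / 2| ≤ ε * b ^ 2 / 2) :
    |((Measure.pi fun _ : Fin n => G) {ω | Real.log (1 / α) < ∑ i, ξ (ω i)}).toReal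
        - (1 - Phi (Real.log (1 / α) / (Real.sqrt n * a)
            + Real.sqrt n * b ^ 2 / (2 * a)))| ≤
      Δ + (max (σ / a) (a / σ) - 1) / Real.sqrt (2 * Real.pi * Real.exp 1)
        + ε / ((1 - ε) * Real.sqrt (2 * Real.pi * Real.exp 1)) :=
  universal_inference_miscoverage_nonasymptotic_general G n hn ξ hξ m σ hσpos Δ hΔ α a b ε hα0 hα1
    ha hε0 hε1 hbias
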